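/- For all integers n ≥ 2 and b ≥ 1, with c = log₂(4n+4)/ln 4 and γ = (2c/(c+1))², log_γ(c^b · n) ≤ log₄(n) + 1 + b·(log₄(log₂(n+1)) + 4). -/

import Mathlib

/-!
Write `M = log₂ (n + 1)`, so that `c = (M + 2) / log 4`. Since `log (1 + 1/c) ≤ 1/c`, the base
satisfies `log γ ≥ log 4 - 2/c = M/c`, hence `log_γ (c^b n) ≤ (b log c + log n) · c/M`. The `log n`
part is at most `log₄ n + 1` because `M log 4 = 2 log (n + 1)`, and the `log c` part is at most
`log₄ M + 4` because `log (M + 2) ≤ log M + 2/M` and `log 4 > 1`.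
-/

open Real

lemma one_lt_log_four : 1 < log 4 := by
  rw [show (4 : ℝ) = 2 ^ 2 by norm_num, log_pow]
  push_cast
  linarith [log_two_gt_d9]

lemma logb_two_four_mul_add_four {x : ℝ} (hx : x + 1 ≠ 0) :
    logb 2 (4 * x + 4) = logb 2 (x + 1) + 2 := by
  rw [show 4 * x + 4 = 2 ^ 2 * (x + 1) by ring, logb_mul (by norm_num) hx, logb_pow,
    logb_self_eq_one one_lt_two]
  ring

lemma three_halves_le_logb_two_add_one {x : ℝ} (hx : 2 ≤ x) : 3 / 2 ≤ logb 2 (x + 1) := by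
  have h : log (2 ^ 3) ≤ log ((x + 1) ^ 2) := log_le_log (by norm_num) (by nlinarith)
  rw [log_pow, log_pow] at h
  push_cast at h
  rw [logb, le_div_iff₀ (log_pos one_lt_two)]
  linarith

lemma log_four_sub_two_div_le_log_sq {c : ℝ} (hc : 0 < c) :
    log 4 - 2 / c ≤ log ((2 * c / (c + 1)) ^ 2) := by
  have h := one_sub_inv_le_log_of_pos (show 0 < c / (c + 1) by positivity)
  rw [inv_div, show 1 - (c + 1) / c = -(1 / c) by field_simp; ring] at h
  rw [log_pow, mul_div_assoc, log_mul two_ne_zero (by positivity),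
    show (4 : ℝ) = 2 ^ 2 by norm_num, log_pow]
  push_cast
  linarith [show 2 / c = 2 * (1 / c) by ring]

lemma logb_sq_two_mul_div_le {c x : ℝ} (hc : 2 / log 4 < c) (hx : 1 ≤ x) :
    logb ((2 * c / (c + 1)) ^ 2) x ≤ log x * c / (c * log 4 - 2) := by
  have hlog4 := one_lt_log_four
  have hc₀ : 0 < c := lt_trans (by positivity) hc
  have hpos : 2 < c * log 4 := (div_lt_iff₀ (by linarith)).1 hc
  calc logb ((2 * c / (c + 1)) ^ 2) x
      ≤ log x / (log 4 - 2 / c) :=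
        div_le_div_of_nonneg_left (log_nonneg hx) (sub_pos.2 ((div_lt_iff₀ hc₀).2 (by linarith)))
          (log_four_sub_two_div_le_log_sq hc₀)
    _ = log x * c / (c * log 4 - 2) := by
        have : c * log 4 - 2 ≠ 0 := by linarith
        field_simp

lemma log_mul_div_logb_two_add_one_le {x : ℝ} (hx : 0 < x) :
    log x * ((logb 2 (x + 1) + 2) / log 4) / logb 2 (x + 1) ≤ logb 4 x + 1 := by
  have hM : logb 2 (x + 1) * log 4 = 2 * log (x + 1) := by
    rw [logb, show (4 : ℝ) = 2 ^ 2 by norm_num, log_pow]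
    field_simp
    push_cast
    ring
  have hlog : 0 < log (x + 1) := log_pos (by linarith)
  have hM₀ : 0 < logb 2 (x + 1) := logb_pos one_lt_two (by linarith)
  have hle : log x / log (x + 1) ≤ 1 :=
    (div_le_one hlog).2 (log_le_log hx (by linarith))
  calc log x * ((logb 2 (x + 1) + 2) / log 4) / logb 2 (x + 1)
      = logb 4 x + log x / log (x + 1) := by
        rw [show logb 4 x = log x / log 4 from rfl]
        field_simp
        linear_combination -log x * hM
    _ ≤ logb 4 x + 1 := by linarith

lemma log_mul_div_le_logb_four_add_four {M : ℝ} (hM : 3 / 2 ≤ M) :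
    log ((M + 2) / log 4) * ((M + 2) / log 4) / M ≤ logb 4 M + 4 := by
  have hlog4 := one_lt_log_four
  have hM₀ : 0 < M := by linarith
  have hc : log ((M + 2) / log 4) ≤ log (M + 2) :=
    log_le_log (by positivity) (div_le_self (by linarith) hlog4.le)
  have hshift : log (M + 2) ≤ log M + 2 / M := by
    have h := log_le_sub_one_of_pos (show 0 < (M + 2) / M by positivity)
    rw [log_div (by linarith) hM₀.ne', show (M + 2) / M - 1 = 2 / M by field_simp; ring] at h
    linarith
  have hlogM : log M ≤ M - 1 := log_le_sub_one_of_pos hM₀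
  have key : log ((M + 2) / log 4) * (M + 2) ≤ M * log M + 4 * M := by
    have h := mul_le_mul_of_nonneg_right (hc.trans hshift) (show 0 ≤ M + 2 by linarith)
    have : (log M + 2 / M) * (M + 2) = M * log M + 2 * log M + 2 + 4 / M := by
      field_simp; ring
    have : 4 / M ≤ 2 * M := by rw [div_le_iff₀ hM₀]; nlinarith
    nlinarith
  rw [logb, div_add' _ _ _ (by positivity), mul_div_assoc', div_div,
    div_le_div_iff₀ (by positivity) (by positivity)]
  nlinarith [mul_le_mul_of_nonneg_right key (show 0 ≤ log 4 by linarith),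
    mul_nonneg (mul_nonneg hM₀.le (show 0 ≤ log 4 by linarith)) (sub_nonneg.2 hlog4.le)]

theorem stmt_11_general (n b : ℕ) (hn : 2 ≤ n) :
    Real.logb ((2 * (Real.logb 2 (4 * n + 4) / Real.log 4) /
        ((Real.logb 2 (4 * n + 4) / Real.log 4) + 1)) ^ 2)
        ((Real.logb 2 (4 * n + 4) / Real.log 4) ^ b * n)
      ≤ Real.logb 4 n + 1 + b * (Real.logb 4 (Real.logb 2 (n + 1)) + 4) := by
  have hn' : (2 : ℝ) ≤ n := by exact_mod_cast hn
  have hlog4 : 0 < log 4 := by linarith [one_lt_log_four]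
  have hM : 3 / 2 ≤ logb 2 ((n : ℝ) + 1) := three_halves_le_logb_two_add_one hn'
  rw [logb_two_four_mul_add_four (by positivity)]
  set M := logb 2 ((n : ℝ) + 1)
  set c := (M + 2) / log 4
  have hc : 2 / log 4 < c := div_lt_div_of_pos_right (by linarith) hlog4
  have hM_eq : c * log 4 - 2 = M := by rw [div_mul_cancel₀ _ hlog4.ne']; ring
  have hc₁ : 1 ≤ c := (one_le_div hlog4).2
    (by linarith [log_le_sub_one_of_pos (show (0 : ℝ) < 4 by norm_num)])
  calc logb ((2 * c / (c + 1)) ^ 2) (c ^ b * n)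
      ≤ log (c ^ b * n) * c / M := by
        rw [← hM_eq]
        exact logb_sq_two_mul_div_le hc (one_le_mul_of_one_le_of_one_le
          (one_le_pow₀ hc₁) (by linarith))
    _ = b * (log c * c / M) + log n * c / M := by
        rw [log_mul (by positivity) (by positivity), log_pow]
        ring
    _ ≤ b * (logb 4 M + 4) + (logb 4 n + 1) := by
        gcongr
        · exact log_mul_div_le_logb_four_add_four hM
        · exact log_mul_div_logb_two_add_one_le (by positivity)
    _ = logb 4 n + 1 + b * (logb 4 M + 4) := by ring

theorem stmt_11 (n b : ℕ) (hn : 2 ≤ n) (hb : 1 ≤ b) :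
    Real.logb ((2 * (Real.logb 2 (4 * n + 4) / Real.log 4) /
        ((Real.logb 2 (4 * n + 4) / Real.log 4) + 1)) ^ 2)
        ((Real.logb 2 (4 * n + 4) / Real.log 4) ^ b * n)
      ≤ Real.logb 4 n + 1 + b * (Real.logb 4 (Real.logb 2 (n + 1)) + 4) :=
  stmt_11_general n b hn
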